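/- Let α, β, α', β', z ∈ ℂ satisfy max(|αα'z|, |αβ'z|, |βα'z|, |ββ'z|) < 1. Then the series ∑_{n≥0} h_n(α,β)·h_n(α',β')·z^n converges absolutely, and (∑_{n≥0} h_n(α,β)·h_n(α',β')·z^n) · (1 − αα'z) · (1 − αβ'z) · (1 − βα'z) · (1 − ββ'z) = 1 − αβα'β'·z². -/
import Mathlib


/-- `h n α β = ∑_{i=0}^{n} α^i β^(n-i)`. -/
noncomputable def hSym (n : ℕ) (α β : ℂ) : ℂ :=
  ∑ i ∈ Finset.range (n + 1), α ^ i * β ^ (n - i)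

lemma hSym_succ (n : ℕ) (α β : ℂ) : hSym (n + 1) α β = α * hSym n α β + β ^ (n + 1) := by
  rw [hSym, Finset.sum_range_succ']
  simp only [pow_zero, one_mul, Nat.sub_zero]
  rw [hSym, Finset.mul_sum]
  congr 1
  apply Finset.sum_congr rfl
  intro i hi
  rw [Finset.mem_range] at hi
  have : n + 1 - (i + 1) = n - i := by omega
  rw [this]; ring

/-- One step: multiplying a power series by a linear Euler factor. -/
lemma rs_step (f g : ℕ → ℂ) (c z : ℂ) (hf : Summable fun n => f n * z ^ n)
    (hg0 : g 0 = f 0) (hgs : ∀ n, g (n + 1) = f (n + 1) - c * f n) :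
    Summable (fun n => g n * z ^ n) ∧
      (∑' n, f n * z ^ n) * (1 - c * z) = ∑' n, g n * z ^ n := by
  have hf1 : Summable (fun n => f (n + 1) * z ^ (n + 1)) :=
    (summable_nat_add_iff (f := fun n => f n * z ^ n) 1).mpr hf
  have hcf : Summable (fun n => (c * z) * (f n * z ^ n)) := hf.mul_left _
  have key : (fun n => g (n + 1) * z ^ (n + 1)) =
      fun n => f (n + 1) * z ^ (n + 1) - (c * z) * (f n * z ^ n) := by
    funext n; rw [hgs]; ring
  have hGs : Summable (fun n => g (n + 1) * z ^ (n + 1)) := by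
    rw [key]; exact hf1.sub hcf
  have hG : Summable (fun n => g n * z ^ n) :=
    (summable_nat_add_iff (f := fun n => g n * z ^ n) 1).mp hGs
  refine ⟨hG, ?_⟩
  have hST : (∑' n, f n * z ^ n) = f 0 + ∑' n, f (n + 1) * z ^ (n + 1) := by
    simpa using Summable.tsum_eq_zero_add hf
  have hRHS : (∑' n, g n * z ^ n) =
      f 0 + ((∑' n, f (n + 1) * z ^ (n + 1)) - c * z * ∑' n, f n * z ^ n) := by
    rw [Summable.tsum_eq_zero_add hG]
    congr 1
    · simp [hg0]
    · rw [key, Summable.tsum_sub hf1 hcf, tsum_mul_left]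
  rw [hRHS, hST]; ring

lemma rs_term_le (α β α' β' z : ℂ) {n i j : ℕ} (hi : i ≤ n) (hj : j ≤ n) :
    ‖α‖ ^ i * ‖β‖ ^ (n - i) * (‖α'‖ ^ j * ‖β'‖ ^ (n - j)) * ‖z‖ ^ n ≤
      (max (max ‖α * α' * z‖ ‖α * β' * z‖) (max ‖β * α' * z‖ ‖β * β' * z‖)) ^ n := by
  set r := max (max ‖α * α' * z‖ ‖α * β' * z‖) (max ‖β * α' * z‖ ‖β * β' * z‖) with hr
  have hr0 : (0:ℝ) ≤ r := (norm_nonneg (α * α' * z)).trans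
    ((le_max_left _ _).trans (le_max_left _ _))
  have hA : ‖α‖ * ‖α'‖ * ‖z‖ ≤ r := by
    rw [← norm_mul, ← norm_mul]; exact (le_max_left _ _).trans (le_max_left _ _)
  have hB : ‖α‖ * ‖β'‖ * ‖z‖ ≤ r := by
    rw [← norm_mul, ← norm_mul]; exact (le_max_right _ _).trans (le_max_left _ _)
  have hC : ‖β‖ * ‖α'‖ * ‖z‖ ≤ r := by
    rw [← norm_mul, ← norm_mul]; exact (le_max_left _ _).trans (le_max_right _ _)
  have hD : ‖β‖ * ‖β'‖ * ‖z‖ ≤ r := by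
    rw [← norm_mul, ← norm_mul]; exact (le_max_right _ _).trans (le_max_right _ _)
  rcases le_total i j with h | h
  · obtain ⟨k, rfl⟩ := Nat.exists_eq_add_of_le h
    obtain ⟨m, rfl⟩ := Nat.exists_eq_add_of_le hj
    have e1 : i + k + m - i = k + m := by omega
    have e2 : i + k + m - (i + k) = m := by omega
    rw [e1, e2]
    calc ‖α‖ ^ i * ‖β‖ ^ (k + m) * (‖α'‖ ^ (i + k) * ‖β'‖ ^ m) * ‖z‖ ^ (i + k + m)
        = (‖α‖ * ‖α'‖ * ‖z‖) ^ i * ((‖β‖ * ‖α'‖ * ‖z‖) ^ k * (‖β‖ * ‖β'‖ * ‖z‖) ^ m) := by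
          ring
      _ ≤ r ^ i * (r ^ k * r ^ m) := by
          exact mul_le_mul (pow_le_pow_left₀ (by positivity) hA i)
            (mul_le_mul (pow_le_pow_left₀ (by positivity) hC k)
              (pow_le_pow_left₀ (by positivity) hD m) (by positivity) (pow_nonneg hr0 k))
            (by positivity) (pow_nonneg hr0 i)
      _ = r ^ (i + k + m) := by rw [pow_add, pow_add]; ring
  · obtain ⟨k, rfl⟩ := Nat.exists_eq_add_of_le h
    obtain ⟨m, rfl⟩ := Nat.exists_eq_add_of_le hi
    have e1 : j + k + m - (j + k) = m := by omega
    have e2 : j + k + m - j = k + m := by omega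
    rw [e1, e2]
    calc ‖α‖ ^ (j + k) * ‖β‖ ^ m * (‖α'‖ ^ j * ‖β'‖ ^ (k + m)) * ‖z‖ ^ (j + k + m)
        = (‖α‖ * ‖α'‖ * ‖z‖) ^ j * ((‖α‖ * ‖β'‖ * ‖z‖) ^ k * (‖β‖ * ‖β'‖ * ‖z‖) ^ m) := by
          ring
      _ ≤ r ^ j * (r ^ k * r ^ m) := by
          exact mul_le_mul (pow_le_pow_left₀ (by positivity) hA j)
            (mul_le_mul (pow_le_pow_left₀ (by positivity) hB k)
              (pow_le_pow_left₀ (by positivity) hD m) (by positivity) (pow_nonneg hr0 k))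
            (by positivity) (pow_nonneg hr0 j)
      _ = r ^ (j + k + m) := by rw [pow_add, pow_add]; ring

noncomputable def cseq (α β α' β' : ℂ) (n : ℕ) : ℂ := hSym n α β * hSym n α' β'

noncomputable def gstep (q : ℂ) (f : ℕ → ℂ) : ℕ → ℂ :=
  fun n => if n = 0 then f 0 else f n - q * f (n - 1)

lemma gstep_zero (q : ℂ) (f : ℕ → ℂ) : gstep q f 0 = f 0 := by simp [gstep]

lemma gstep_succ (q : ℂ) (f : ℕ → ℂ) (n : ℕ) :
    gstep q f (n + 1) = f (n + 1) - q * f n := by simp [gstep]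

lemma cseq_norm_le (α β α' β' z : ℂ) (n : ℕ) :
    ‖cseq α β α' β' n * z ^ n‖ ≤ ((n : ℝ) + 1) ^ 2 *
      (max (max ‖α * α' * z‖ ‖α * β' * z‖) (max ‖β * α' * z‖ ‖β * β' * z‖)) ^ n := by
  set r := max (max ‖α * α' * z‖ ‖α * β' * z‖) (max ‖β * α' * z‖ ‖β * β' * z‖) with hr
  have hA : ‖hSym n α β‖ ≤ ∑ i ∈ Finset.range (n + 1), ‖α‖ ^ i * ‖β‖ ^ (n - i) := by
    refine (norm_sum_le _ _).trans_eq ?_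
    exact Finset.sum_congr rfl fun i _ => by rw [norm_mul, norm_pow, norm_pow]
  have hB : ‖hSym n α' β'‖ ≤ ∑ j ∈ Finset.range (n + 1), ‖α'‖ ^ j * ‖β'‖ ^ (n - j) := by
    refine (norm_sum_le _ _).trans_eq ?_
    exact Finset.sum_congr rfl fun i _ => by rw [norm_mul, norm_pow, norm_pow]
  calc ‖cseq α β α' β' n * z ^ n‖ = ‖hSym n α β‖ * ‖hSym n α' β'‖ * ‖z‖ ^ n := by
        rw [cseq, norm_mul, norm_mul, norm_pow]
    _ ≤ (∑ i ∈ Finset.range (n + 1), ‖α‖ ^ i * ‖β‖ ^ (n - i)) *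
          (∑ j ∈ Finset.range (n + 1), ‖α'‖ ^ j * ‖β'‖ ^ (n - j)) * ‖z‖ ^ n := by
        exact mul_le_mul (mul_le_mul hA hB (norm_nonneg _) (by positivity)) le_rfl
          (by positivity) (by positivity)
    _ = ∑ i ∈ Finset.range (n + 1), ∑ j ∈ Finset.range (n + 1),
          ‖α‖ ^ i * ‖β‖ ^ (n - i) * (‖α'‖ ^ j * ‖β'‖ ^ (n - j)) * ‖z‖ ^ n := by
        rw [Finset.sum_mul_sum, Finset.sum_mul]
        exact Finset.sum_congr rfl fun i _ => by rw [Finset.sum_mul]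
    _ ≤ ∑ i ∈ Finset.range (n + 1), ∑ j ∈ Finset.range (n + 1), r ^ n := by
        refine Finset.sum_le_sum fun i hi => Finset.sum_le_sum fun j hj => ?_
        rw [Finset.mem_range] at hi hj
        exact rs_term_le α β α' β' z (by omega) (by omega)
    _ = ((n : ℝ) + 1) ^ 2 * r ^ n := by
        simp [Finset.sum_const, Finset.card_range]
        ring

/-- The analytic local Rankin–Selberg Euler factor identity: if all four of
`|αα'z|, |αβ'z|, |βα'z|, |ββ'z|` are `< 1`, then `∑ h_n(α,β)h_n(α',β') z^n` converges
absolutely and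
`(∑ h_n(α,β)h_n(α',β') z^n)(1-αα'z)(1-αβ'z)(1-βα'z)(1-ββ'z) = 1 - αβα'β'z²`. -/
theorem stmt_1 (α β α' β' z : ℂ)
    (h₁ : ‖α * α' * z‖ < 1) (h₂ : ‖α * β' * z‖ < 1)
    (h₃ : ‖β * α' * z‖ < 1) (h₄ : ‖β * β' * z‖ < 1) :
    Summable (fun n : ℕ => ‖hSym n α β * hSym n α' β' * z ^ n‖) ∧
    (∑' n : ℕ, hSym n α β * hSym n α' β' * z ^ n) *
        (1 - α * α' * z) * (1 - α * β' * z) * (1 - β * α' * z) * (1 - β * β' * z) =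
      1 - α * β * α' * β' * z ^ 2 := by
  set r := max (max ‖α * α' * z‖ ‖α * β' * z‖) (max ‖β * α' * z‖ ‖β * β' * z‖) with hr
  have hr0 : (0:ℝ) ≤ r := (norm_nonneg (α * α' * z)).trans
    ((le_max_left _ _).trans (le_max_left _ _))
  have hr1 : r < 1 := by
    rw [hr]; exact max_lt (max_lt h₁ h₂) (max_lt h₃ h₄)
  have hsum2 : Summable (fun n : ℕ => ((n : ℝ) + 1) ^ 2 * r ^ n) := by
    have A : Summable (fun n : ℕ => (n : ℝ) ^ 2 * r ^ n) :=
      summable_pow_mul_geometric_of_norm_lt_one 2 (by rwa [Real.norm_eq_abs, abs_of_nonneg hr0])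
    have B : Summable (fun n : ℕ => (n : ℝ) ^ 1 * r ^ n) :=
      summable_pow_mul_geometric_of_norm_lt_one 1 (by rwa [Real.norm_eq_abs, abs_of_nonneg hr0])
    have C : Summable (fun n : ℕ => r ^ n) := summable_geometric_of_lt_one hr0 hr1
    exact (A.add ((B.mul_left 2).add C)).congr (fun n => by ring)
  have hnorm : Summable (fun n => ‖cseq α β α' β' n * z ^ n‖) :=
    Summable.of_nonneg_of_le (fun n => norm_nonneg _) (fun n => cseq_norm_le α β α' β' z n) hsum2
  have hf : Summable (fun n => cseq α β α' β' n * z ^ n) := hnorm.of_norm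
  obtain ⟨hs1, he1⟩ := rs_step (cseq α β α' β') (gstep (α * α') (cseq α β α' β'))
    (α * α') z hf (gstep_zero _ _) (gstep_succ _ _)
  obtain ⟨hs2, he2⟩ := rs_step _ (gstep (α * β') (gstep (α * α') (cseq α β α' β')))
    (α * β') z hs1 (gstep_zero _ _) (gstep_succ _ _)
  obtain ⟨hs3, he3⟩ := rs_step _
    (gstep (β * α') (gstep (α * β') (gstep (α * α') (cseq α β α' β'))))
    (β * α') z hs2 (gstep_zero _ _) (gstep_succ _ _)
  obtain ⟨hs4, he4⟩ := rs_step _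
    (gstep (β * β') (gstep (β * α') (gstep (α * β') (gstep (α * α') (cseq α β α' β')))))
    (β * β') z hs3 (gstep_zero _ _) (gstep_succ _ _)
  constructor
  · exact hnorm
  · have h0 : (∑' n : ℕ, hSym n α β * hSym n α' β' * z ^ n) =
        ∑' n : ℕ, cseq α β α' β' n * z ^ n := rfl
    rw [h0, he1, he2, he3, he4]
    have hvan : ∀ n ∉ Finset.range 4,
        (gstep (β * β') (gstep (β * α') (gstep (α * β') (gstep (α * α')
          (cseq α β α' β')))) n * z ^ n) = 0 := by
      intro n hn
      rw [Finset.mem_range, not_lt] at hn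
      obtain ⟨m, rfl⟩ : ∃ m, n = m + 1 + 1 + 1 + 1 := ⟨n - 4, by omega⟩
      have hz : gstep (β * β') (gstep (β * α') (gstep (α * β') (gstep (α * α')
          (cseq α β α' β')))) (m + 1 + 1 + 1 + 1) = 0 := by
        simp only [gstep_succ, cseq, hSym_succ]
        ring
      rw [hz, zero_mul]
    rw [tsum_eq_sum hvan]
    simp [Finset.sum_range_succ, gstep, cseq, hSym]
    ring
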